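/- arXiv:2504.18741 — 9 statements merged into one kernel-verified Lean document; each statement's English description precedes it below -/
import Mathlib

section
/- Let U be an n×n unitary matrix over ℂ and let Δ_n denote the algebra of n×n complex diagonal matrices. Then the unital *-subalgebras Δ_n and UΔ_nU* of M_n(ℂ) are quasiorthogonal if and only if √n·U is a complex Hadamard matrix (equivalently, every entry of U has modulus 1/√n). -/
open Matrix

/-- Two subsets of `M_n(ℂ)` (e.g. unital *-subalgebras) are *quasiorthogonal* if
`Tr(AB) = Tr(A)Tr(B)/n` for all `A ∈ 𝒜` and `B ∈ ℬ`. -/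
def Quasiorthogonal {n : ℕ} (𝒜 ℬ : Set (Matrix (Fin n) (Fin n) ℂ)) : Prop :=
  ∀ A ∈ 𝒜, ∀ B ∈ ℬ, (A * B).trace = A.trace * B.trace / (n : ℂ)

/-- A matrix `H ∈ M_n(ℂ)` is a *complex Hadamard matrix* if all of its entries have
modulus `1` and `H Hᴴ = n I`. -/
def IsComplexHadamard {n : ℕ} (H : Matrix (Fin n) (Fin n) ℂ) : Prop :=
  (∀ i j, ‖H i j‖ = 1) ∧ H * Hᴴ = (n : ℂ) • (1 : Matrix (Fin n) (Fin n) ℂ)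

lemma entry_eq_of_quasi {n : ℕ} (U : Matrix (Fin n) (Fin n) ℂ)
    (hU : U ∈ Matrix.unitaryGroup (Fin n) ℂ)
    (hq : Quasiorthogonal {D : Matrix (Fin n) (Fin n) ℂ | D.IsDiag}
      ((fun D => U * D * Uᴴ) '' {D : Matrix (Fin n) (Fin n) ℂ | D.IsDiag}))
    (i j : Fin n) : U i j * (starRingEnd ℂ) (U i j) = 1 / (n : ℂ) := by
  have hdiag : ∀ k : Fin n, (Matrix.single k k (1:ℂ)).IsDiag := by
    intro k a b hab
    simp only [Matrix.single, Matrix.of_apply]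
    rw [if_neg]
    rintro ⟨rfl, rfl⟩
    exact hab rfl
  have key := hq (Matrix.single i i 1) (hdiag i)
    (U * Matrix.single j j 1 * Uᴴ) ⟨_, hdiag j, rfl⟩
  rw [Matrix.trace_single_eq_same] at key
  have h1 : (Matrix.single i i (1:ℂ) * (U * Matrix.single j j 1 * Uᴴ)).trace
      = U i j * (starRingEnd ℂ) (U i j) := by
    simp [Matrix.trace, Matrix.diag, Matrix.mul_apply, Matrix.single,
      Finset.mul_sum, ite_and, Finset.sum_ite_eq, Finset.sum_ite_eq']
  have h2 : (U * Matrix.single j j (1:ℂ) * Uᴴ).trace = 1 := by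
    rw [Matrix.trace_mul_comm, ← Matrix.mul_assoc,
      show Uᴴ * U = 1 from Matrix.mem_unitaryGroup_iff'.mp hU, Matrix.one_mul,
      Matrix.trace_single_eq_same]
  rw [h1, h2] at key
  simpa using key

/-- For a unitary `U ∈ M_n(ℂ)`, the algebra `Δ_n` of diagonal matrices
and its conjugate `U Δ_n U*` are quasiorthogonal iff `√n · U` is a complex Hadamard
matrix. -/
theorem diag_conj_quasiorthogonal_iff_hadamard {n : ℕ}
    (U : Matrix (Fin n) (Fin n) ℂ) (hU : U ∈ Matrix.unitaryGroup (Fin n) ℂ) :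
    Quasiorthogonal {D : Matrix (Fin n) (Fin n) ℂ | D.IsDiag}
      ((fun D => U * D * Uᴴ) '' {D : Matrix (Fin n) (Fin n) ℂ | D.IsDiag}) ↔
    IsComplexHadamard (((Real.sqrt n : ℝ) : ℂ) • U) := by
  have hUU : U * Uᴴ = 1 := Matrix.mem_unitaryGroup_iff.mp hU
  constructor
  · intro hq
    constructor
    · intro i j
      have hn : 0 < n := i.pos
      have h := entry_eq_of_quasi U hU hq i j
      rw [Complex.mul_conj] at h
      have h' : Complex.normSq (U i j) = 1 / (n : ℝ) := by
        apply Complex.ofReal_inj.mp; push_cast; exact h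
      have hnorm : ‖U i j‖ = Real.sqrt (1 / (n : ℝ)) := by
        rw [Complex.norm_def, h']
      simp only [Matrix.smul_apply, norm_smul, Complex.norm_real, hnorm]
      rw [Real.norm_eq_abs, abs_of_nonneg (Real.sqrt_nonneg _),
        ← Real.sqrt_mul (Nat.cast_nonneg n), mul_one_div,
        div_self (Nat.cast_ne_zero.mpr hn.ne' : (n:ℝ) ≠ 0), Real.sqrt_one]
    · rw [Matrix.conjTranspose_smul, Matrix.smul_mul, Matrix.mul_smul, hUU, smul_smul]
      congr 1
      rw [Complex.star_def, Complex.conj_ofReal, ← Complex.ofReal_mul,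
        Real.mul_self_sqrt (Nat.cast_nonneg n), Complex.ofReal_natCast]
  · rintro ⟨h1, h2⟩ A hA B' ⟨B, hB, rfl⟩
    have hmod : ∀ i j, U i j * (starRingEnd ℂ) (U i j) = 1 / (n : ℂ) := by
      intro i j
      have hn : 0 < n := i.pos
      have h3 := h1 i j
      simp only [Matrix.smul_apply, norm_smul, Complex.norm_real,
        abs_of_nonneg (Real.sqrt_nonneg _)] at h3
      have h4 : (n : ℝ) * ‖U i j‖ ^ 2 = 1 := by
        have := congrArg (· ^ 2) h3
        simpa [mul_pow, Real.sq_sqrt (Nat.cast_nonneg n : (0:ℝ) ≤ n)] using this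
      have h5 : ‖U i j‖ ^ 2 = 1 / (n : ℝ) := by
        field_simp at h4 ⊢
        linarith [h4]
      rw [Complex.mul_conj]
      rw [Complex.normSq_eq_norm_sq]
      rw [h5]
      push_cast
      ring
    have hM : ∀ i, (U * B * Uᴴ) i i = B.trace / (n : ℂ) := by
      intro i
      have hrow : ∀ k, (U * B) i k = U i k * B k k := by
        intro k
        rw [Matrix.mul_apply, Finset.sum_eq_single k]
        · intro j _ hj
          rw [hB hj, mul_zero]
        · intro h; exact absurd (Finset.mem_univ k) h
      rw [Matrix.mul_apply]
      simp_rw [hrow, Matrix.conjTranspose_apply]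
      have hterm : ∀ k : Fin n, U i k * B k k * star (U i k) = B k k / (n : ℂ) := by
        intro k
        rw [mul_right_comm, Complex.star_def, hmod i k]
        ring
      simp_rw [hterm]
      rw [← Finset.sum_div, Matrix.trace]
      rfl
    have hdiagA : ∀ i, (A * (U * B * Uᴴ)) i i = A i i * ((U * B * Uᴴ) i i) := by
      intro i
      rw [Matrix.mul_apply, Finset.sum_eq_single i]
      · intro j _ hj
        rw [hA (Ne.symm hj), zero_mul]
      · intro h; exact absurd (Finset.mem_univ i) h
    have htr : (A * (U * B * Uᴴ)).trace = ∑ i, A i i * (B.trace / (n : ℂ)) := by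
      rw [Matrix.trace]
      exact Finset.sum_congr rfl fun i _ => by rw [Matrix.diag_apply, hdiagA i, hM i]
    have hTr : (U * B * Uᴴ).trace = B.trace := by
      rw [Matrix.trace_mul_comm, ← Matrix.mul_assoc,
        show Uᴴ * U = 1 from Matrix.mem_unitaryGroup_iff'.mp hU, Matrix.one_mul]
    rw [htr, ← Finset.sum_mul, hTr]
    simp only [Matrix.trace, Matrix.diag]
    ring
end

section
/- Let U, V be n×n unitary matrices, let r = (m_1,…,m_{d1}) and c = (n_1,…,n_{d2}) be partitions of n, partition the columns of U consecutively into blocks U_i with m_i columns and of V into blocks V_j with n_j columns, and set A = span{U_iU_i*}, B = span{V_jV_j*}. Then A and B are quasiorthogonal if and only if the block-index matrix X = (U*V)∘conj(U*V) is quasiable with respect to r and c. -/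
open Matrix

/-- The index in `Fin n` of column `b` of the `i`-th block, when the `n` columns are
partitioned consecutively into `d` blocks of sizes `m 0, m 1, …, m (d-1)`. -/
def colIdx {n d : ℕ} (m : Fin d → ℕ) (h : ∑ i, m i = n) (i : Fin d) (b : Fin (m i)) :
    Fin n := by
  refine ⟨(∑ j ∈ Finset.univ.filter (fun j => j < i), m j) + b.1, ?_⟩
  have hb := b.2
  have hnotmem : i ∉ Finset.univ.filter (fun j => j < i) := by simp
  have hle : ∑ j ∈ insert i (Finset.univ.filter (fun j => j < i)), m j ≤ ∑ j, m j :=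
    Finset.sum_le_sum_of_subset (Finset.subset_univ _)
  rw [Finset.sum_insert hnotmem] at hle
  omega

/-- `U_i`: the `n × m_i` submatrix of `U` consisting of the `i`-th consecutive block of
columns. -/
def colBlock {n d : ℕ} (U : Matrix (Fin n) (Fin n) ℂ) (m : Fin d → ℕ)
    (h : ∑ i, m i = n) (i : Fin d) : Matrix (Fin n) (Fin (m i)) ℂ :=
  fun a b => U a (colIdx m h i b)

/-- `P_i = U_i U_i^*`. -/
noncomputable def blockProj {n d : ℕ} (U : Matrix (Fin n) (Fin n) ℂ) (m : Fin d → ℕ)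
    (h : ∑ i, m i = n) (i : Fin d) : Matrix (Fin n) (Fin n) ℂ :=
  colBlock U m h i * (colBlock U m h i)ᴴ

lemma colBlock_conjT_mul {n d1 d2 : ℕ} (U V : Matrix (Fin n) (Fin n) ℂ)
    (m : Fin d1 → ℕ) (hm : ∑ i, m i = n) (c : Fin d2 → ℕ) (hc : ∑ j, c j = n)
    (i : Fin d1) (j : Fin d2) (a : Fin (m i)) (b : Fin (c j)) :
    ((colBlock U m hm i)ᴴ * colBlock V c hc j) a b
      = (Uᴴ * V) (colIdx m hm i a) (colIdx c hc j b) := by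
  simp [mul_apply, conjTranspose_apply, colBlock]

lemma trace_blockProj {n d : ℕ} (U : Matrix (Fin n) (Fin n) ℂ)
    (hU : Uᴴ * U = 1) (m : Fin d → ℕ) (hm : ∑ i, m i = n) (i : Fin d) :
    (blockProj U m hm i).trace = (m i : ℂ) := by
  rw [blockProj, trace_mul_comm, trace]
  have h : ∀ b : Fin (m i), ((colBlock U m hm i)ᴴ * colBlock U m hm i).diag b = 1 := by
    intro b
    rw [Matrix.diag_apply, colBlock_conjT_mul U U m hm m hm i i b b, hU]
    simp [Matrix.one_apply]
  trans (∑ _b : Fin (m i), (1 : ℂ))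
  · exact Finset.sum_congr rfl fun b _ => h b
  · simp

lemma trace_blockProj_mul {n d1 d2 : ℕ} (U V : Matrix (Fin n) (Fin n) ℂ)
    (m : Fin d1 → ℕ) (hm : ∑ i, m i = n) (c : Fin d2 → ℕ) (hc : ∑ j, c j = n)
    (i : Fin d1) (j : Fin d2) :
    (blockProj U m hm i * blockProj V c hc j).trace
      = ∑ a : Fin (m i), ∑ b : Fin (c j),
          ((‖(Uᴴ * V) (colIdx m hm i a) (colIdx c hc j b)‖ ^ 2 : ℝ) : ℂ) := by
  set A := colBlock U m hm i with hA
  set B := colBlock V c hc j with hB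
  have h1 : blockProj U m hm i * blockProj V c hc j = A * ((Aᴴ * B) * Bᴴ) := by
    simp [blockProj, Matrix.mul_assoc]
    rfl
  have h2 : Bᴴ * A = (Aᴴ * B)ᴴ := by simp
  rw [h1, trace_mul_comm, Matrix.mul_assoc, h2, trace]
  have key : ∀ a : Fin (m i), ((Aᴴ * B) * (Aᴴ * B)ᴴ).diag a
      = ∑ b : Fin (c j), ((‖(Uᴴ * V) (colIdx m hm i a) (colIdx c hc j b)‖ ^ 2 : ℝ) : ℂ) := by
    intro a
    rw [Matrix.diag_apply, mul_apply]
    refine Finset.sum_congr rfl fun b _ => ?_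
    rw [conjTranspose_apply, colBlock_conjT_mul U V m hm c hc i j a b]
    have hz : ∀ z : ℂ, z * star z = ((‖z‖ ^ 2 : ℝ) : ℂ) := fun z => by
      rw [show star z = starRingEnd ℂ z from rfl, Complex.mul_conj,
        Complex.normSq_eq_norm_sq]
    exact hz _
  exact Finset.sum_congr rfl fun a _ => key a

/-- The commutative algebras `𝒜 = span {U_i U_i^*}` and
`ℬ = span {V_j V_j^*}` are quasiorthogonal iff the block-index matrix
`X = (U*V)∘conj(U*V)` is quasiable with respect to `r` and `c`, i.e. the entries of
each `(i,j)` block of `X` sum to `m_i n_j / n`. -/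
theorem quasiorthogonal_iff_quasiable {n d1 d2 : ℕ}
    (U V : Matrix (Fin n) (Fin n) ℂ)
    (hU : U ∈ Matrix.unitaryGroup (Fin n) ℂ) (hV : V ∈ Matrix.unitaryGroup (Fin n) ℂ)
    (m : Fin d1 → ℕ) (hm : ∑ i, m i = n) (hmpos : ∀ i, 0 < m i)
    (c : Fin d2 → ℕ) (hc : ∑ j, c j = n) (hcpos : ∀ j, 0 < c j) :
    Quasiorthogonal
        (Submodule.span ℂ (Set.range (blockProj U m hm)) : Set (Matrix (Fin n) (Fin n) ℂ))
        (Submodule.span ℂ (Set.range (blockProj V c hc)) : Set (Matrix (Fin n) (Fin n) ℂ)) ↔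
      ∀ (i : Fin d1) (j : Fin d2),
        ∑ a : Fin (m i), ∑ b : Fin (c j),
            ‖(Uᴴ * V) (colIdx m hm i a) (colIdx c hc j b)‖ ^ 2
          = (m i : ℝ) * (c j : ℝ) / (n : ℝ) := by
  have hU' : Uᴴ * U = 1 := by
    simpa [Matrix.star_eq_conjTranspose] using hU.1
  have hV' : Vᴴ * V = 1 := by
    simpa [Matrix.star_eq_conjTranspose] using hV.1
  have cast_eq : ∀ (i : Fin d1) (j : Fin d2),
      (∑ a : Fin (m i), ∑ b : Fin (c j),
          ((‖(Uᴴ * V) (colIdx m hm i a) (colIdx c hc j b)‖ ^ 2 : ℝ) : ℂ))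
        = (((∑ a : Fin (m i), ∑ b : Fin (c j),
            ‖(Uᴴ * V) (colIdx m hm i a) (colIdx c hc j b)‖ ^ 2 : ℝ)) : ℂ) := by
    intro i j; push_cast; rfl
  constructor
  · intro hq i j
    have h := hq (blockProj U m hm i)
      (Submodule.subset_span (Set.mem_range_self i)) (blockProj V c hc j)
      (Submodule.subset_span (Set.mem_range_self j))
    rw [trace_blockProj_mul U V m hm c hc i j, trace_blockProj U hU' m hm i,
      trace_blockProj V hV' c hc j, cast_eq i j] at h
    have : (((∑ a : Fin (m i), ∑ b : Fin (c j),
        ‖(Uᴴ * V) (colIdx m hm i a) (colIdx c hc j b)‖ ^ 2 : ℝ)) : ℂ)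
        = (((m i : ℝ) * (c j : ℝ) / (n : ℝ) : ℝ) : ℂ) := by
      rw [h]; push_cast; ring
    exact_mod_cast this
  · intro hX
    have hgen : ∀ (i : Fin d1) (j : Fin d2),
        (blockProj U m hm i * blockProj V c hc j).trace
          = (blockProj U m hm i).trace * (blockProj V c hc j).trace / (n : ℂ) := by
      intro i j
      rw [trace_blockProj_mul U V m hm c hc i j, trace_blockProj U hU' m hm i,
        trace_blockProj V hV' c hc j, cast_eq i j, hX i j]
      push_cast
      ring
    intro A hA B hB
    rw [SetLike.mem_coe] at hA hB
    -- first: fix B a generator, induct on A; then induct on B.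
    have step1 : ∀ (j : Fin d2), ∀ A ∈ Submodule.span ℂ (Set.range (blockProj U m hm)),
        (A * blockProj V c hc j).trace
          = A.trace * (blockProj V c hc j).trace / (n : ℂ) := by
      intro j A hA
      induction hA using Submodule.span_induction with
      | mem x hx => obtain ⟨i, rfl⟩ := hx; exact hgen i j
      | zero => simp
      | add x y _ _ hx hy => rw [add_mul, trace_add, trace_add, hx, hy]; ring
      | smul a x _ hx =>
          rw [smul_mul_assoc, trace_smul, trace_smul, hx, smul_eq_mul, smul_eq_mul]; ring
    induction hB using Submodule.span_induction with
    | mem x hx => obtain ⟨j, rfl⟩ := hx; exact step1 j A hA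
    | zero => simp
    | add x y _ _ hx hy => rw [mul_add, trace_add, trace_add, hx, hy]; ring
    | smul a x _ hx =>
        rw [mul_smul_comm, trace_smul, trace_smul, hx, smul_eq_mul, smul_eq_mul]; ring
end

section
/- Let L1 and L2 be n×n Latin squares with symbol set {1,…,n}, and for 1 ≤ i,j ≤ n let S_{ij} denote the number of cells (r,c) with L1(r,c) = i and L2(r,c) = j. Then Σ_{i,j=1}^n S_{ij}² ≥ n², with equality if and only if S_{ij} = 1 for all i,j, i.e., if and only if L1 and L2 are orthogonal Latin squares. Consequently, the *-subalgebras A(L1) and A(L2) of matrices with patterns L1 and L2 inside the commutative C*-algebra (M_n(ℂ), ∘) with Schur multiplication, whose measure of orthogonality equals n^{-2} Σ_{i,j} S_{ij}², are quasiorthogonal exactly when L1 and L2 are orthogonal. -/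
open Matrix Finset

def IsLatinSquare {n : ℕ} (L : Fin n → Fin n → Fin n) : Prop :=
  (∀ r, Function.Bijective (L r)) ∧ (∀ c, Function.Bijective fun r => L r c)

def pairCount {n : ℕ} (L1 L2 : Fin n → Fin n → Fin n) (i j : Fin n) : ℕ :=
  (Finset.univ.filter fun rc : Fin n × Fin n => L1 rc.1 rc.2 = i ∧ L2 rc.1 rc.2 = j).card

def patternSet {n : ℕ} (L : Fin n → Fin n → Fin n) : Set (Matrix (Fin n) (Fin n) ℂ) :=
  {A | ∃ f : Fin n → ℂ, ∀ r c, A r c = f (L r c)}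

namespace LatinAux

variable {n : ℕ} (L1 L2 : Fin n → Fin n → Fin n)

/-- the pair map -/
def F : Fin n × Fin n → Fin n × Fin n := fun rc => (L1 rc.1 rc.2, L2 rc.1 rc.2)

lemma pairCount_eq (i j : Fin n) :
    pairCount L1 L2 i j = (univ.filter fun rc => F L1 L2 rc = (i, j)).card := by
  unfold pairCount F
  congr 1
  apply Finset.filter_congr
  intros; simp [Prod.ext_iff]

lemma sum_pairCount : ∑ i : Fin n, ∑ j : Fin n, pairCount L1 L2 i j = n ^ 2 := by
  simp only [pairCount_eq]
  rw [← Fintype.sum_prod_type (f := fun p : Fin n × Fin n =>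
    (univ.filter fun rc => F L1 L2 rc = p).card)]
  have h := Finset.card_eq_sum_card_fiberwise
    (s := (univ : Finset (Fin n × Fin n))) (t := univ) (f := F L1 L2)
    (fun x _ => mem_univ _)
  simp only [card_univ, Fintype.card_prod, Fintype.card_fin] at h
  rw [← h]; ring

lemma trace_pattern (L : Fin n → Fin n → Fin n) (hL : ∀ r, Function.Bijective (L r))
    (f : Fin n → ℂ) : ∑ r : Fin n, ∑ c : Fin n, f (L r c) = n * ∑ s : Fin n, f s := by
  have h : ∀ r, ∑ c : Fin n, f (L r c) = ∑ s : Fin n, f s := fun r =>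
    Fintype.sum_bijective (L r) (hL r) _ _ (fun c => rfl)
  simp [h, Finset.sum_const, nsmul_eq_mul]

end LatinAux

open LatinAux

/-- For Latin squares `L1, L2` of order `n` with coincidence counts
`S i j`: `Σ_{i,j} S_{ij}² ≥ n²`, with equality iff `S i j = 1` for all `i,j`, iff `L1`
and `L2` are orthogonal; and the pattern algebras `A(L1)`, `A(L2)` in `(M_n(ℂ), ∘)`
(where the trace of a Schur multiplier `A` is `Σ_{r,c} A r c` and the ambient dimension
is `n²`) are quasiorthogonal exactly when `L1` and `L2` are orthogonal. -/
theorem latin_square_quasiorthogonality {n : ℕ}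
    (L1 L2 : Fin n → Fin n → Fin n)
    (h1 : IsLatinSquare L1) (h2 : IsLatinSquare L2) :
    ((n : ℕ) ^ 2 ≤ ∑ i : Fin n, ∑ j : Fin n, pairCount L1 L2 i j ^ 2) ∧
    ((∑ i : Fin n, ∑ j : Fin n, pairCount L1 L2 i j ^ 2 = n ^ 2) ↔
      ∀ i j, pairCount L1 L2 i j = 1) ∧
    ((∀ i j, pairCount L1 L2 i j = 1) ↔
      Function.Injective fun rc : Fin n × Fin n => (L1 rc.1 rc.2, L2 rc.1 rc.2)) ∧
    ((∀ A ∈ patternSet L1, ∀ B ∈ patternSet L2,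
        ∑ r : Fin n, ∑ c : Fin n, A r c * B r c
          = (∑ r : Fin n, ∑ c : Fin n, A r c) * (∑ r : Fin n, ∑ c : Fin n, B r c)
              / ((n : ℂ) ^ 2)) ↔
      ∀ i j, pairCount L1 L2 i j = 1) := by
  -- integer bookkeeping
  have hsum : (∑ i : Fin n, ∑ j : Fin n, (pairCount L1 L2 i j : ℤ)) = (n : ℤ) ^ 2 := by
    exact_mod_cast congrArg (Nat.cast : ℕ → ℤ) (sum_pairCount L1 L2)
  set T : ℤ := ∑ i : Fin n, ∑ j : Fin n, ((pairCount L1 L2 i j : ℤ) - 1) ^ 2 with hT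
  have hTnn : 0 ≤ T := Finset.sum_nonneg fun i _ => Finset.sum_nonneg fun j _ => sq_nonneg _
  have hexp : (∑ i : Fin n, ∑ j : Fin n, (pairCount L1 L2 i j : ℤ) ^ 2) = (n : ℤ) ^ 2 + T := by
    have key : ∀ x : ℤ, x ^ 2 = (x - 1) ^ 2 + (2 * x - 1) := fun x => by ring
    calc ∑ i : Fin n, ∑ j : Fin n, (pairCount L1 L2 i j : ℤ) ^ 2
        = ∑ i : Fin n, ∑ j : Fin n,
            (((pairCount L1 L2 i j : ℤ) - 1) ^ 2 + (2 * (pairCount L1 L2 i j : ℤ) - 1)) := by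
          simp only [← key]
      _ = T + (2 * (∑ i : Fin n, ∑ j : Fin n, (pairCount L1 L2 i j : ℤ)) - (n : ℤ)^2) := by
          rw [hT]
          simp only [Finset.sum_add_distrib, Finset.sum_sub_distrib, ← Finset.mul_sum,
            Finset.sum_const, card_univ, Fintype.card_fin, nsmul_eq_mul, mul_one]
          ring
      _ = (n : ℤ) ^ 2 + T := by rw [hsum]; ring
  have part1 : (n : ℕ) ^ 2 ≤ ∑ i : Fin n, ∑ j : Fin n, pairCount L1 L2 i j ^ 2 := by
    have : (n : ℤ) ^ 2 ≤ ∑ i : Fin n, ∑ j : Fin n, (pairCount L1 L2 i j : ℤ) ^ 2 := by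
      rw [hexp]; linarith
    exact_mod_cast this
  have part2 : (∑ i : Fin n, ∑ j : Fin n, pairCount L1 L2 i j ^ 2 = n ^ 2) ↔
      ∀ i j, pairCount L1 L2 i j = 1 := by
    constructor
    · intro h
      have hz : T = 0 := by
        have : (∑ i : Fin n, ∑ j : Fin n, (pairCount L1 L2 i j : ℤ) ^ 2) = (n : ℤ) ^ 2 := by
          exact_mod_cast congrArg (Nat.cast : ℕ → ℤ) h
        linarith [hexp, this]
      intro i j
      rw [hT] at hz
      have h2' := (Finset.sum_eq_zero_iff_of_nonneg
        (fun i _ => Finset.sum_nonneg fun j _ => sq_nonneg _)).mp hz i (mem_univ i)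
      have h3' := (Finset.sum_eq_zero_iff_of_nonneg
        (fun j _ => sq_nonneg _)).mp h2' j (mem_univ j)
      have : (pairCount L1 L2 i j : ℤ) - 1 = 0 := by
        exact pow_eq_zero_iff (two_ne_zero) |>.mp h3'
      omega
    · intro h
      simp only [h]
      simp [Finset.sum_const, card_univ]
      ring
  have part3 : (∀ i j, pairCount L1 L2 i j = 1) ↔
      Function.Injective fun rc : Fin n × Fin n => (L1 rc.1 rc.2, L2 rc.1 rc.2) := by
    constructor
    · intro h a b hab
      have ha : a ∈ univ.filter fun rc => F L1 L2 rc = F L1 L2 b := by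
        simp [F]; exact Prod.ext_iff.mp hab
      have hb : b ∈ univ.filter fun rc => F L1 L2 rc = F L1 L2 b := by simp [F]
      have hcard : (univ.filter fun rc => F L1 L2 rc = F L1 L2 b).card = 1 := by
        rw [← pairCount_eq]; exact h _ _
      obtain ⟨x, hx⟩ := Finset.card_eq_one.mp hcard
      rw [hx] at ha hb
      simp only [Finset.mem_singleton] at ha hb
      rw [ha, hb]
    · intro hinj i j
      have hbij : Function.Bijective (F L1 L2) :=
        Finite.injective_iff_bijective.mp hinj
      let e := Equiv.ofBijective _ hbij
      rw [pairCount_eq]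
      have : (univ.filter fun rc => F L1 L2 rc = (i, j)) = {e.symm (i, j)} := by
        ext rc
        simp only [Finset.mem_filter, Finset.mem_univ, true_and, Finset.mem_singleton]
        rw [Equiv.eq_symm_apply]
        rfl
      rw [this, Finset.card_singleton]
  refine ⟨part1, part2, part3, ?_⟩
  constructor
  · -- equality for all pattern matrices → pairCount = 1
    intro hq i j
    have hn : (n : ℂ) ≠ 0 := by
      have : 0 < n := Fin.pos i
      exact_mod_cast this.ne'
    set f : Fin n → ℂ := fun s => if s = i then 1 else 0 with hf
    set g : Fin n → ℂ := fun s => if s = j then 1 else 0 with hg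
    have hA : (fun r c => f (L1 r c)) ∈ patternSet L1 := ⟨f, fun _ _ => rfl⟩
    have hB : (fun r c => g (L2 r c)) ∈ patternSet L2 := ⟨g, fun _ _ => rfl⟩
    have heq := hq _ hA _ hB
    have hfs : ∑ s : Fin n, f s = 1 := by simp [hf]
    have hgs : ∑ s : Fin n, g s = 1 := by simp [hg]
    rw [trace_pattern L1 h1.1, trace_pattern L2 h2.1, hfs, hgs] at heq
    have hlhs : ∑ r : Fin n, ∑ c : Fin n, f (L1 r c) * g (L2 r c)
        = (pairCount L1 L2 i j : ℂ) := by
      have : ∀ r c, f (L1 r c) * g (L2 r c)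
          = if L1 r c = i ∧ L2 r c = j then (1 : ℂ) else 0 := by
        intro r c
        simp only [hf, hg]
        split_ifs with hA' hB' hB' <;> simp_all
      simp only [this]
      rw [← Fintype.sum_prod_type (f := fun p : Fin n × Fin n =>
        if L1 p.1 p.2 = i ∧ L2 p.1 p.2 = j then (1 : ℂ) else 0)]
      rw [Finset.sum_boole]
      rfl
    rw [hlhs] at heq
    have : (pairCount L1 L2 i j : ℂ) = 1 := by
      rw [heq]
      field_simp
    exact_mod_cast this
  · -- orthogonal → equality
    intro h
    rintro A ⟨f, hfA⟩ B ⟨g, hgB⟩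
    have hbij : Function.Bijective (F L1 L2) :=
      Finite.injective_iff_bijective.mp (part3.mp h)
    have hAB : ∑ r : Fin n, ∑ c : Fin n, A r c * B r c
        = (∑ s : Fin n, f s) * (∑ s : Fin n, g s) := by
      simp only [hfA, hgB]
      rw [← Fintype.sum_prod_type (f := fun p : Fin n × Fin n =>
        f (L1 p.1 p.2) * g (L2 p.1 p.2))]
      have := Fintype.sum_bijective (F L1 L2) hbij
        (fun rc : Fin n × Fin n => f (L1 rc.1 rc.2) * g (L2 rc.1 rc.2))
        (fun p : Fin n × Fin n => f p.1 * g p.2) (fun rc => rfl)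
      rw [this, Fintype.sum_prod_type, ← Finset.sum_mul_sum]
    have hAt : ∑ r : Fin n, ∑ c : Fin n, A r c = n * ∑ s : Fin n, f s := by
      simp only [hfA]; exact trace_pattern L1 h1.1 f
    have hBt : ∑ r : Fin n, ∑ c : Fin n, B r c = n * ∑ s : Fin n, g s := by
      simp only [hgB]; exact trace_pattern L2 h2.1 g
    rw [hAB, hAt, hBt]
    rcases Nat.eq_zero_or_pos n with rfl | hn
    · simp
    · have hn' : (n : ℂ) ≠ 0 := by exact_mod_cast hn.ne'
      field_simp
end

section
/- Let A and B be unital *-subalgebras of M_n(ℂ). If A contains a rank-one orthogonal projection and A and B are quasiorthogonal, then B has a separating vector; explicitly, if P = vv* ∈ A with v a unit vector, then v is a separating vector for B. -/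
open Matrix

/-- `v` is a *separating vector* for `ℬ` if `N v = 0` implies `N = 0` for every
`N ∈ ℬ`. -/
def IsSeparatingVector {n : ℕ} (ℬ : Set (Matrix (Fin n) (Fin n) ℂ)) (v : Fin n → ℂ) :
    Prop :=
  ∀ N ∈ ℬ, N.mulVec v = 0 → N = 0

/-- If the unital *-subalgebra `𝒜` of `M_n(ℂ)` contains a rank-one
orthogonal projection `P = v v*` (with `v` a unit vector) and `𝒜`, `ℬ` are
quasiorthogonal, then `v` is a separating vector for `ℬ` (so `ℬ` has a separating
vector). -/
theorem separating_vector_of_quasiorthogonal {n : ℕ}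
    (𝒜 ℬ : StarSubalgebra ℂ (Matrix (Fin n) (Fin n) ℂ))
    (v : Fin n → ℂ) (hv : ∑ i, ‖v i‖ ^ 2 = 1)
    (hP : Matrix.vecMulVec v (star v) ∈ 𝒜)
    (hqo : Quasiorthogonal (𝒜 : Set (Matrix (Fin n) (Fin n) ℂ))
      (ℬ : Set (Matrix (Fin n) (Fin n) ℂ))) :
    IsSeparatingVector (ℬ : Set (Matrix (Fin n) (Fin n) ℂ)) v := by
  intro N hN hNv
  rcases Nat.eq_zero_or_pos n with hn | hn
  · subst hn; exact Subsingleton.elim _ _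
  have hB : Nᴴ * N ∈ ℬ := mul_mem (star_mem hN) hN
  have key := hqo _ hP _ hB
  -- trace of P
  have htrP : (Matrix.vecMulVec v (star v)).trace = 1 := by
    have : ∀ i, v i * star (v i) = ((‖v i‖ ^ 2 : ℝ) : ℂ) := by
      intro i
      rw [mul_comm, Complex.star_def, Complex.conj_mul']
      push_cast
      ring
    simp only [Matrix.trace, Matrix.diag, Matrix.vecMulVec_apply, Pi.star_apply, this]
    rw [← Complex.ofReal_sum, hv, Complex.ofReal_one]
  -- LHS trace = 0
  have hLHS : (Matrix.vecMulVec v (star v) * (Nᴴ * N)).trace = 0 := by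
    have h0 : (Nᴴ * N) *ᵥ v = 0 := by
      rw [← Matrix.mulVec_mulVec, hNv, Matrix.mulVec_zero]
    have : ∀ j, ∑ i, (Nᴴ * N) j i * v i = 0 := by
      intro j; exact congrFun h0 j
    simp only [Matrix.trace, Matrix.diag, Matrix.mul_apply, Matrix.vecMulVec_apply,
      Pi.star_apply]
    calc ∑ i, ∑ j, v i * star (v j) * (Nᴴ * N) j i
        = ∑ j, star (v j) * ∑ i, (Nᴴ * N) j i * v i := by
          rw [Finset.sum_comm]
          congr 1; ext j
          rw [Finset.mul_sum]
          congr 1; ext i; ring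
      _ = 0 := by simp [this]
  rw [hLHS, htrP, one_mul] at key
  have hn' : (n : ℂ) ≠ 0 := Nat.cast_ne_zero.mpr hn.ne'
  have htr0 : (Nᴴ * N).trace = 0 := by
    field_simp at key
    exact key.symm.trans (zero_mul _)
  -- trace NᴴN = ∑ ‖N j i‖²
  have htrR : (Nᴴ * N).trace = ((∑ i, ∑ j, ‖N j i‖ ^ 2 : ℝ) : ℂ) := by
    simp only [Matrix.trace, Matrix.diag, Matrix.mul_apply, Matrix.conjTranspose_apply]
    push_cast
    congr 1; ext i; congr 1; ext j
    rw [Complex.star_def, Complex.conj_mul']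
  rw [htrR] at htr0
  have hsum : (∑ i, ∑ j, ‖N j i‖ ^ 2 : ℝ) = 0 := by exact_mod_cast htr0
  ext j i
  have h1 : ∀ i ∈ Finset.univ, (∑ j, ‖N j i‖ ^ 2 : ℝ) = 0 := by
    refine (Finset.sum_eq_zero_iff_of_nonneg ?_).mp hsum
    intro i _; positivity
  have h2 : ‖N j i‖ ^ 2 = 0 := by
    refine (Finset.sum_eq_zero_iff_of_nonneg ?_).mp (h1 i (Finset.mem_univ i)) j
      (Finset.mem_univ j)
    intro k _; positivity
  simpa using pow_eq_zero_iff (n := 2) (by norm_num) |>.mp h2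
end

section
/- Let U, V be n×n unitary matrices. Fix positive integers a_k, m_k (1 ≤ k ≤ d1) with Σ_k a_k m_k = n and b_ℓ, n_ℓ (1 ≤ ℓ ≤ d2) with Σ_ℓ b_ℓ n_ℓ = n. Partition the columns of U consecutively into blocks U_{k,p} (1 ≤ k ≤ d1, 1 ≤ p ≤ a_k), each with m_k columns, and the columns of V consecutively into blocks V_{ℓ,q} (1 ≤ ℓ ≤ d2, 1 ≤ q ≤ b_ℓ), each with n_ℓ columns. Let A = U(⊕_{k} M_{a_k}⊗I_{m_k})U* and B = V(⊕_{ℓ} M_{b_ℓ}⊗I_{n_ℓ})V*. Then the measure of orthogonality satisfies Q(A,B) = Σ_{k,ℓ} (1/(m_k n_ℓ)) Σ_{p,p'=1}^{a_k} Σ_{q,q'=1}^{b_ℓ} |Tr((U_{k,p}*V_{ℓ,q})* (U_{k,p'}*V_{ℓ,q'}))|². -/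
open Matrix

/-- The index in `Fin n` of column `b` of block `U_{k,p}`, when the `n` columns are
partitioned consecutively into blocks `U_{k,p}` (`k < d`, `p < a k`), each with `m k`
columns, taken in consecutive order (first all blocks with `k = 0`, then `k = 1`, …,
and within each `k` in order of `p`). -/
def dblIdx {n d : ℕ} (a m : Fin d → ℕ) (h : ∑ k, a k * m k = n) (k : Fin d)
    (p : Fin (a k)) (b : Fin (m k)) : Fin n := by
  refine ⟨(∑ j ∈ Finset.univ.filter (fun j => j < k), a j * m j) + (p.1 * m k + b.1), ?_⟩
  have hb := b.2
  have hp : p.1 + 1 ≤ a k := p.2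
  have hpm : p.1 * m k + b.1 < a k * m k := by
    have h1 : (p.1 + 1) * m k = p.1 * m k + m k := by ring
    have h2 : (p.1 + 1) * m k ≤ a k * m k := Nat.mul_le_mul_right _ hp
    omega
  have hnotmem : k ∉ Finset.univ.filter (fun j => j < k) := by simp
  have hle : ∑ j ∈ insert k (Finset.univ.filter (fun j => j < k)), a j * m j
      ≤ ∑ j, a j * m j := Finset.sum_le_sum_of_subset (Finset.subset_univ _)
  rw [Finset.sum_insert hnotmem] at hle
  omega

/-- `U_{k,p}`: the `n × m_k` submatrix of `U` consisting of the columns of the `(k,p)`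
block. -/
def dblBlock {n d : ℕ} (U : Matrix (Fin n) (Fin n) ℂ) (a m : Fin d → ℕ)
    (h : ∑ k, a k * m k = n) (k : Fin d) (p : Fin (a k)) :
    Matrix (Fin n) (Fin (m k)) ℂ :=
  fun r b => U r (dblIdx a m h k p b)

/-- For unitaries `U, V` with `𝒜 = U(⊕_k M_{a_k} ⊗ I_{m_k})U*` and
`ℬ = V(⊕_ℓ M_{b_ℓ} ⊗ I_{n_ℓ})V*`, using the orthonormal bases
`{U_{k,p}U_{k,q}*/√m_k}` of `𝒜` and `{V_{ℓ,r}V_{ℓ,s}*/√n_ℓ}` of `ℬ`, the measure of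
orthogonality satisfies
`Q(𝒜,ℬ) = Σ_{k,ℓ} (1/(m_k n_ℓ)) Σ_{p,p',q,q'} |Tr((U_{k,p}*V_{ℓ,q})* (U_{k,p'}*V_{ℓ,q'}))|²`. -/
theorem general_measure_of_orthogonality_formula {n d1 d2 : ℕ}
    (U V : Matrix (Fin n) (Fin n) ℂ)
    (hU : U ∈ Matrix.unitaryGroup (Fin n) ℂ) (hV : V ∈ Matrix.unitaryGroup (Fin n) ℂ)
    (a m : Fin d1 → ℕ) (ha : ∀ k, 0 < a k) (hm : ∀ k, 0 < m k)
    (hn1 : ∑ k, a k * m k = n)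
    (b nn : Fin d2 → ℕ) (hb : ∀ l, 0 < b l) (hnn : ∀ l, 0 < nn l)
    (hn2 : ∑ l, b l * nn l = n) :
    ∑ k : Fin d1, ∑ l : Fin d2, ∑ p : Fin (a k), ∑ q : Fin (a k),
        ∑ r : Fin (b l), ∑ s : Fin (b l),
          ‖((((Real.sqrt (m k))⁻¹ : ℝ) : ℂ) •
                (dblBlock U a m hn1 k p * (dblBlock U a m hn1 k q)ᴴ) *
              ((((Real.sqrt (nn l))⁻¹ : ℝ) : ℂ) •
                (dblBlock V b nn hn2 l r * (dblBlock V b nn hn2 l s)ᴴ))).trace‖ ^ 2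
      = ∑ k : Fin d1, ∑ l : Fin d2,
          (1 / ((m k : ℝ) * (nn l : ℝ))) *
            ∑ p : Fin (a k), ∑ p' : Fin (a k), ∑ q : Fin (b l), ∑ q' : Fin (b l),
              ‖(((dblBlock U a m hn1 k p)ᴴ * dblBlock V b nn hn2 l q)ᴴ *
                  ((dblBlock U a m hn1 k p')ᴴ * dblBlock V b nn hn2 l q')).trace‖ ^ 2 := by

  refine Finset.sum_congr rfl fun k _ => Finset.sum_congr rfl fun l _ => ?_
  rw [Finset.mul_sum]
  refine Finset.sum_congr rfl fun p _ => ?_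
  rw [Finset.mul_sum]
  refine Finset.sum_congr rfl fun q _ => ?_
  rw [Finset.sum_comm, Finset.mul_sum]
  refine Finset.sum_congr rfl fun r _ => ?_
  rw [Finset.mul_sum]
  refine Finset.sum_congr rfl fun s _ => ?_
  set A := dblBlock U a m hn1 k p
  set A' := dblBlock U a m hn1 k q
  set B := dblBlock V b nn hn2 l r
  set B' := dblBlock V b nn hn2 l s
  have h1 : (Aᴴ * B)ᴴ * (A'ᴴ * B') = Bᴴ * (A * A'ᴴ * B') := by
    simp [Matrix.conjTranspose_mul, Matrix.mul_assoc]
  have h2 : A * A'ᴴ * (B' * Bᴴ) = (A * A'ᴴ * B') * Bᴴ := by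
    simp [Matrix.mul_assoc]
  have htr : ((((Real.sqrt (m k))⁻¹ : ℝ) : ℂ) • (A * A'ᴴ) *
      ((((Real.sqrt (nn l))⁻¹ : ℝ) : ℂ) • (B' * Bᴴ))).trace
      = ((((Real.sqrt (m k))⁻¹ : ℝ) : ℂ) * (((Real.sqrt (nn l))⁻¹ : ℝ) : ℂ)) *
        ((Aᴴ * B)ᴴ * (A'ᴴ * B')).trace := by
    rw [smul_mul_assoc, mul_smul_comm, Matrix.trace_smul, Matrix.trace_smul, smul_smul,
      smul_eq_mul, h1, h2, Matrix.trace_mul_comm]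
  rw [htr]
  have hm0 : (0:ℝ) ≤ (m k : ℝ) := Nat.cast_nonneg _
  have hn0 : (0:ℝ) ≤ (nn l : ℝ) := Nat.cast_nonneg _
  rw [norm_mul, norm_mul, mul_pow, mul_pow, Complex.norm_real, Complex.norm_real,
    Real.norm_eq_abs, Real.norm_eq_abs, abs_inv, abs_inv,
    abs_of_nonneg (Real.sqrt_nonneg _), abs_of_nonneg (Real.sqrt_nonneg _),
    inv_pow, inv_pow, Real.sq_sqrt hm0, Real.sq_sqrt hn0]
  ring
end

section
/- Let U, V be n×n unitary matrices with column blocks U_{k,p} (1 ≤ k ≤ d1, 1 ≤ p ≤ a_k, each of m_k columns) and V_{ℓ,q} (1 ≤ ℓ ≤ d2, 1 ≤ q ≤ b_ℓ, each of n_ℓ columns), where Σ_k a_k m_k = n = Σ_ℓ b_ℓ n_ℓ, and let A = U(⊕_k M_{a_k}⊗I_{m_k})U*, B = V(⊕_ℓ M_{b_ℓ}⊗I_{n_ℓ})V*. Then A and B are quasiorthogonal if and only if both of the following hold: (i) ‖U_{k,p}*V_{ℓ,q}‖_F² = m_k n_ℓ / n for all k, ℓ, p, q (i.e., the block-index matrix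 (U*V)∘conj(U*V) is quasiable with respect to the induced partitions); and (ii) Tr((U_{k,p}*V_{ℓ,q})*(U_{k,p'}*V_{ℓ,q'})) = 0 for all k, ℓ and all (p,q) ≠ (p',q'), i.e., for each k, ℓ the family {U_{k,p}*V_{ℓ,q}} is orthogonal in the trace inner product. -/
open Matrix

lemma dblIdx_eq_iff {n d : ℕ} (a m : Fin d → ℕ) (h : ∑ k, a k * m k = n) (k : Fin d)
    (hm : 0 < m k) (p q : Fin (a k)) (b : Fin (m k)) :
    dblIdx a m h k p b = dblIdx a m h k q b ↔ p = q := by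
  constructor
  · intro he
    have hv := congrArg Fin.val he
    simp only [dblIdx] at hv
    have : p.1 * m k = q.1 * m k := by omega
    exact Fin.ext (Nat.eq_of_mul_eq_mul_right hm this)
  · rintro rfl; rfl

lemma trace_dblBlock {n d : ℕ} {U : Matrix (Fin n) (Fin n) ℂ} (hU : Uᴴ * U = 1)
    (a m : Fin d → ℕ) (hm : ∀ k, 0 < m k) (h : ∑ k, a k * m k = n) (k : Fin d)
    (p q : Fin (a k)) :
    ((dblBlock U a m h k p)ᴴ * dblBlock U a m h k q).trace
      = if p = q then (m k : ℂ) else 0 := by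
  have entry : ∀ i j : Fin n, ∑ r, star (U r i) * U r j = if i = j then 1 else 0 := by
    intro i j
    have := congrFun (congrFun hU i) j
    simpa [Matrix.mul_apply, Matrix.conjTranspose_apply, Matrix.one_apply] using this
  have key : ((dblBlock U a m h k p)ᴴ * dblBlock U a m h k q).trace
      = ∑ _b : Fin (m k), if p = q then (1:ℂ) else 0 := by
    simp only [Matrix.trace, Matrix.diag, Matrix.mul_apply, Matrix.conjTranspose_apply,
      dblBlock]
    refine Finset.sum_congr rfl fun b _ => ?_
    rw [entry, if_congr (dblIdx_eq_iff a m h k (hm k) p q b) rfl rfl]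
  rw [key]
  split <;> simp

lemma trace_gen {n m m' : ℕ} (P P' : Matrix (Fin n) (Fin m) ℂ)
    (Q Q' : Matrix (Fin n) (Fin m') ℂ) :
    (P * P'ᴴ * (Q * Q'ᴴ)).trace = ((Pᴴ * Q')ᴴ * (P'ᴴ * Q)).trace := by
  rw [Matrix.conjTranspose_mul, Matrix.conjTranspose_conjTranspose]
  rw [show P * P'ᴴ * (Q * Q'ᴴ) = (P * (P'ᴴ * Q)) * Q'ᴴ by simp only [Matrix.mul_assoc]]
  rw [Matrix.trace_mul_comm, Matrix.mul_assoc]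

lemma quasi_span {n : ℕ} (S T : Set (Matrix (Fin n) (Fin n) ℂ))
    (h : ∀ A ∈ S, ∀ B ∈ T, (A * B).trace = A.trace * B.trace / (n:ℂ)) :
    Quasiorthogonal (Submodule.span ℂ S : Set (Matrix (Fin n) (Fin n) ℂ))
      (Submodule.span ℂ T : Set (Matrix (Fin n) (Fin n) ℂ)) := by
  have key1 : ∀ A ∈ S, ∀ B ∈ Submodule.span ℂ T,
      (A * B).trace = A.trace * B.trace / (n:ℂ) := by
    intro A hA B hB
    induction hB using Submodule.span_induction with
    | mem x hx => exact h A hA x hx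
    | zero => simp
    | add x y hx hy ihx ihy =>
        simp only [Matrix.mul_add, Matrix.trace_add, ihx, ihy]; ring
    | smul c x hx ih =>
        simp only [Matrix.mul_smul, Matrix.trace_smul, ih, smul_eq_mul]; ring
  intro A hA B hB
  induction hA using Submodule.span_induction with
  | mem x hx => exact key1 x hx B hB
  | zero => simp
  | add x y hx hy ihx ihy =>
      simp only [Matrix.add_mul, Matrix.trace_add, ihx, ihy]; ring
  | smul c x hx ih =>
      simp only [Matrix.smul_mul, Matrix.trace_smul, ih, smul_eq_mul]; ring


/-- With `𝒜 = U(⊕_k M_{a_k} ⊗ I_{m_k})U* = span {U_{k,p}U_{k,q}*}`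
and `ℬ = V(⊕_ℓ M_{b_ℓ} ⊗ I_{n_ℓ})V* = span {V_{ℓ,r}V_{ℓ,s}*}`: `𝒜` and `ℬ` are
quasiorthogonal iff (i) `‖U_{k,p}* V_{ℓ,q}‖_F² = m_k n_ℓ / n` for all `k, ℓ, p, q`
(i.e. the block-index matrix is quasiable with respect to the induced partitions), and
(ii) for each `k, ℓ` the family `{U_{k,p}* V_{ℓ,q}}` is orthogonal in the trace inner
product. -/
theorem general_quasiorthogonal_iff {n d1 d2 : ℕ}
    (U V : Matrix (Fin n) (Fin n) ℂ)
    (hU : U ∈ Matrix.unitaryGroup (Fin n) ℂ) (hV : V ∈ Matrix.unitaryGroup (Fin n) ℂ)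
    (a m : Fin d1 → ℕ) (ha : ∀ k, 0 < a k) (hm : ∀ k, 0 < m k)
    (hn1 : ∑ k, a k * m k = n)
    (b nn : Fin d2 → ℕ) (hb : ∀ l, 0 < b l) (hnn : ∀ l, 0 < nn l)
    (hn2 : ∑ l, b l * nn l = n) :
    Quasiorthogonal
        (Submodule.span ℂ {M : Matrix (Fin n) (Fin n) ℂ |
            ∃ (k : Fin d1) (p q : Fin (a k)),
              M = dblBlock U a m hn1 k p * (dblBlock U a m hn1 k q)ᴴ} :
          Set (Matrix (Fin n) (Fin n) ℂ))
        (Submodule.span ℂ {M : Matrix (Fin n) (Fin n) ℂ |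
            ∃ (l : Fin d2) (r s : Fin (b l)),
              M = dblBlock V b nn hn2 l r * (dblBlock V b nn hn2 l s)ᴴ} :
          Set (Matrix (Fin n) (Fin n) ℂ)) ↔
      ((∀ (k : Fin d1) (l : Fin d2) (p : Fin (a k)) (q : Fin (b l)),
          (((dblBlock U a m hn1 k p)ᴴ * dblBlock V b nn hn2 l q)ᴴ *
              ((dblBlock U a m hn1 k p)ᴴ * dblBlock V b nn hn2 l q)).trace
            = ((m k : ℂ) * (nn l : ℂ)) / (n : ℂ)) ∧
        (∀ (k : Fin d1) (l : Fin d2) (p p' : Fin (a k)) (q q' : Fin (b l)),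
          ¬(p = p' ∧ q = q') →
            (((dblBlock U a m hn1 k p)ᴴ * dblBlock V b nn hn2 l q)ᴴ *
                ((dblBlock U a m hn1 k p')ᴴ * dblBlock V b nn hn2 l q')).trace = 0)) := by
  have hUu : Uᴴ * U = 1 := by
    simpa [Matrix.star_eq_conjTranspose] using hU.1
  have hVu : Vᴴ * V = 1 := by
    simpa [Matrix.star_eq_conjTranspose] using hV.1
  constructor
  · intro hQ
    have gen : ∀ (k : Fin d1) (l : Fin d2) (p p' : Fin (a k)) (q q' : Fin (b l)),
        (((dblBlock U a m hn1 k p)ᴴ * dblBlock V b nn hn2 l q')ᴴ *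
            ((dblBlock U a m hn1 k p')ᴴ * dblBlock V b nn hn2 l q)).trace
          = (if p' = p then (m k : ℂ) else 0) * (if q' = q then (nn l : ℂ) else 0)
              / (n : ℂ) := by
      intro k l p p' q q'
      have hA : dblBlock U a m hn1 k p * (dblBlock U a m hn1 k p')ᴴ ∈
          (Submodule.span ℂ {M : Matrix (Fin n) (Fin n) ℂ |
            ∃ (k : Fin d1) (p q : Fin (a k)),
              M = dblBlock U a m hn1 k p * (dblBlock U a m hn1 k q)ᴴ} :
          Set (Matrix (Fin n) (Fin n) ℂ)) :=
        Submodule.subset_span ⟨k, p, p', rfl⟩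
      have hB : dblBlock V b nn hn2 l q * (dblBlock V b nn hn2 l q')ᴴ ∈
          (Submodule.span ℂ {M : Matrix (Fin n) (Fin n) ℂ |
            ∃ (l : Fin d2) (r s : Fin (b l)),
              M = dblBlock V b nn hn2 l r * (dblBlock V b nn hn2 l s)ᴴ} :
          Set (Matrix (Fin n) (Fin n) ℂ)) :=
        Submodule.subset_span ⟨l, q, q', rfl⟩
      have := hQ _ hA _ hB
      rw [trace_gen, Matrix.trace_mul_comm (dblBlock U a m hn1 k p),
        trace_dblBlock hUu a m hm hn1,
        Matrix.trace_mul_comm (dblBlock V b nn hn2 l q),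
        trace_dblBlock hVu b nn hnn hn2] at this
      exact this
    constructor
    · intro k l p q
      have := gen k l p p q q
      simpa using this
    · intro k l p p' q q' hne
      have := gen k l p p' q' q
      rcases eq_or_ne p' p with rfl | hp
      · have hq : q ≠ q' := fun hq => hne ⟨rfl, hq⟩
        simpa [hq] using this
      · simpa [hp] using this
  · rintro ⟨h1, h2⟩
    apply quasi_span
    rintro A ⟨k, p, p', rfl⟩ B ⟨l, q, q', rfl⟩
    rw [trace_gen, Matrix.trace_mul_comm (dblBlock U a m hn1 k p),
      trace_dblBlock hUu a m hm hn1,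
      Matrix.trace_mul_comm (dblBlock V b nn hn2 l q),
      trace_dblBlock hVu b nn hnn hn2]
    rcases eq_or_ne p' p with rfl | hp
    · rcases eq_or_ne q' q with rfl | hq
      · simpa using h1 k l p' q'
      · have := h2 k l p' p' q' q (fun h => hq h.2)
        simpa [hq] using this
    · have := h2 k l p p' q' q (fun h => hp h.1.symm)
      simpa [hp] using this
end

section
/- Let U, V be n×n unitary matrices with column blocks U_{k,p} (1 ≤ k ≤ d1, 1 ≤ p ≤ a_k, each of m_k columns) and V_{ℓ,q} (1 ≤ ℓ ≤ d2, 1 ≤ q ≤ b_ℓ, each of n_ℓ columns), where Σ_k a_k m_k = n = Σ_ℓ b_ℓ n_ℓ, and let A = U(⊕_k M_{a_k}⊗I_{m_k})U*, B = V(⊕_ℓ M_{b_ℓ}⊗I_{n_ℓ})V*. If there exist indices k, ℓ and distinct pairs (p,q) ≠ (p',q') with U_{k,p}*V_{ℓ,q} = U_{k,p'}*V_{ℓ,q'} (i.e., the multi-set Γ_{k,ℓ} = {U_{k,p}*V_{ℓ,q} : 1 ≤ p ≤ a_k, 1 ≤ q ≤ b_ℓ} has an element of multiplicity at least 2), then A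 and B are not quasiorthogonal. -/
open Matrix

lemma aux_trace_zero {a b : ℕ} {S : Matrix (Fin a) (Fin b) ℂ}
    (h : (Sᴴ * S).trace = 0) : S = 0 := by
  have hcalc : (Sᴴ * S).trace = ((∑ j, ∑ i, Complex.normSq (S i j) : ℝ) : ℂ) := by
    simp only [Matrix.trace, Matrix.diag, Matrix.mul_apply, Matrix.conjTranspose_apply]
    push_cast
    refine Finset.sum_congr rfl fun j _ => Finset.sum_congr rfl fun i _ => ?_
    rw [Complex.normSq_eq_conj_mul_self]
    rfl
  rw [hcalc, Complex.ofReal_eq_zero] at h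
  have h1 := (Finset.sum_eq_zero_iff_of_nonneg
    (fun j _ => Finset.sum_nonneg fun i _ => Complex.normSq_nonneg _)).mp h
  ext i j
  have h2 := (Finset.sum_eq_zero_iff_of_nonneg
    (fun i _ => Complex.normSq_nonneg _)).mp (h1 j (Finset.mem_univ _)) i (Finset.mem_univ _)
  simpa using Complex.normSq_eq_zero.mp h2

lemma dblIdx_inj_p {n d : ℕ} {a m : Fin d → ℕ} {h : ∑ k, a k * m k = n} {k : Fin d}
    {p p' : Fin (a k)} {x : Fin (m k)} (hm : 0 < m k) :
    dblIdx a m h k p x = dblIdx a m h k p' x ↔ p = p' := by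
  constructor
  · intro he
    have hv := congrArg Fin.val he
    simp only [dblIdx] at hv
    have : p.1 * m k = p'.1 * m k := by omega
    exact Fin.ext (Nat.eq_of_mul_eq_mul_right hm this)
  · rintro rfl; rfl

lemma dblBlock_trace {n d : ℕ} (U : Matrix (Fin n) (Fin n) ℂ)
    (hU : U ∈ Matrix.unitaryGroup (Fin n) ℂ) (a m : Fin d → ℕ) (hm : ∀ k, 0 < m k)
    (h : ∑ k, a k * m k = n) (k : Fin d) (p p' : Fin (a k)) :
    ((dblBlock U a m h k p)ᴴ * dblBlock U a m h k p').trace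
      = if p = p' then (m k : ℂ) else 0 := by
  have hU1 : Uᴴ * U = 1 := by
    rw [← Matrix.star_eq_conjTranspose]
    exact (Unitary.mem_iff.mp hU).1
  have hdiag : ∀ x : Fin (m k), ((dblBlock U a m h k p)ᴴ * dblBlock U a m h k p') x x
      = if p = p' then 1 else 0 := by
    intro x
    have h1 : ((dblBlock U a m h k p)ᴴ * dblBlock U a m h k p') x x
        = (Uᴴ * U) (dblIdx a m h k p x) (dblIdx a m h k p' x) := by
      simp [Matrix.mul_apply, Matrix.conjTranspose_apply, dblBlock]
    rw [h1, hU1, Matrix.one_apply]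
    simp [dblIdx_inj_p (hm k)]
  rw [Matrix.trace]
  simp only [Matrix.diag]
  rw [Finset.sum_congr rfl fun x _ => hdiag x]
  by_cases hpp : p = p' <;> simp [hpp]

/-- With `𝒜 = U(⊕_k M_{a_k} ⊗ I_{m_k})U* = span {U_{k,p}U_{k,q}*}`
and `ℬ = V(⊕_ℓ M_{b_ℓ} ⊗ I_{n_ℓ})V* = span {V_{ℓ,r}V_{ℓ,s}*}`: if for some `k, ℓ` the
multi-set `Γ_{k,ℓ} = {U_{k,p}* V_{ℓ,q}}` has an element of multiplicity at least two
(i.e. `U_{k,p}* V_{ℓ,q} = U_{k,p'}* V_{ℓ,q'}` for some `(p,q) ≠ (p',q')`), then `𝒜`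
and `ℬ` are not quasiorthogonal. -/
theorem not_quasiorthogonal_of_repeated_block {n d1 d2 : ℕ}
    (U V : Matrix (Fin n) (Fin n) ℂ)
    (hU : U ∈ Matrix.unitaryGroup (Fin n) ℂ) (hV : V ∈ Matrix.unitaryGroup (Fin n) ℂ)
    (a m : Fin d1 → ℕ) (ha : ∀ k, 0 < a k) (hm : ∀ k, 0 < m k)
    (hn1 : ∑ k, a k * m k = n)
    (b nn : Fin d2 → ℕ) (hb : ∀ l, 0 < b l) (hnn : ∀ l, 0 < nn l)
    (hn2 : ∑ l, b l * nn l = n)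
    (hrep : ∃ (k : Fin d1) (l : Fin d2) (p p' : Fin (a k)) (q q' : Fin (b l)),
      ¬(p = p' ∧ q = q') ∧
        (dblBlock U a m hn1 k p)ᴴ * dblBlock V b nn hn2 l q
          = (dblBlock U a m hn1 k p')ᴴ * dblBlock V b nn hn2 l q') :
    ¬ Quasiorthogonal
        (Submodule.span ℂ {M : Matrix (Fin n) (Fin n) ℂ |
            ∃ (k : Fin d1) (p q : Fin (a k)),
              M = dblBlock U a m hn1 k p * (dblBlock U a m hn1 k q)ᴴ} :
          Set (Matrix (Fin n) (Fin n) ℂ))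
        (Submodule.span ℂ {M : Matrix (Fin n) (Fin n) ℂ |
            ∃ (l : Fin d2) (r s : Fin (b l)),
              M = dblBlock V b nn hn2 l r * (dblBlock V b nn hn2 l s)ᴴ} :
          Set (Matrix (Fin n) (Fin n) ℂ)) := by
  intro hquasi
  obtain ⟨k, l, p, p', q, q', hne, heq⟩ := hrep
  set X := dblBlock U a m hn1 k p with hXdef
  set X' := dblBlock U a m hn1 k p' with hX'def
  set Z := dblBlock V b nn hn2 l q with hZdef
  set Z' := dblBlock V b nn hn2 l q' with hZ'def
  set S := Xᴴ * Z with hSdef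
  have hn0 : 0 < n := by
    have h1 : a k * m k ≤ ∑ j, a j * m j :=
      Finset.single_le_sum (f := fun j => a j * m j) (fun j _ => Nat.zero_le _) (Finset.mem_univ k)
    have h2 : 0 < a k * m k := Nat.mul_pos (ha k) (hm k)
    omega
  have htr : ∀ (P P' : Matrix (Fin n) (Fin (m k)) ℂ) (Q Q' : Matrix (Fin n) (Fin (b l) ×
      Fin (nn l)) ℂ), True := fun _ _ _ _ => trivial
  -- trace cyclic computation helper
  have hcyc : ∀ {α β : ℕ} (P : Matrix (Fin n) (Fin α) ℂ) (P' : Matrix (Fin n) (Fin α) ℂ)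
      (Q : Matrix (Fin n) (Fin β) ℂ) (Q' : Matrix (Fin n) (Fin β) ℂ),
      (P * P'ᴴ * (Q' * Qᴴ)).trace = ((P'ᴴ * Q') * (Pᴴ * Q)ᴴ).trace := by
    intro α β P P' Q Q'
    calc (P * P'ᴴ * (Q' * Qᴴ)).trace
        = (P * (P'ᴴ * Q' * Qᴴ)).trace := by rw [Matrix.mul_assoc, Matrix.mul_assoc]
      _ = ((P'ᴴ * Q' * Qᴴ) * P).trace := Matrix.trace_mul_comm _ _
      _ = ((P'ᴴ * Q') * (Qᴴ * P)).trace := by rw [Matrix.mul_assoc]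
      _ = ((P'ᴴ * Q') * (Pᴴ * Q)ᴴ).trace := by
          rw [Matrix.conjTranspose_mul, Matrix.conjTranspose_conjTranspose]
  by_cases hS : S = 0
  · -- use A = X Xᴴ, B = Z Zᴴ
    have hA : X * Xᴴ ∈ (Submodule.span ℂ {M : Matrix (Fin n) (Fin n) ℂ |
        ∃ (k : Fin d1) (p q : Fin (a k)),
          M = dblBlock U a m hn1 k p * (dblBlock U a m hn1 k q)ᴴ} :
        Set (Matrix (Fin n) (Fin n) ℂ)) :=
      Submodule.subset_span ⟨k, p, p, rfl⟩
    have hB : Z * Zᴴ ∈ (Submodule.span ℂ {M : Matrix (Fin n) (Fin n) ℂ |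
        ∃ (l : Fin d2) (r s : Fin (b l)),
          M = dblBlock V b nn hn2 l r * (dblBlock V b nn hn2 l s)ᴴ} :
        Set (Matrix (Fin n) (Fin n) ℂ)) :=
      Submodule.subset_span ⟨l, q, q, rfl⟩
    have hq := hquasi _ hA _ hB
    rw [hcyc X X Z Z] at hq
    have hXtr : (X * Xᴴ).trace = (m k : ℂ) := by
      rw [Matrix.trace_mul_comm]
      have := dblBlock_trace U hU a m hm hn1 k p p
      rw [if_pos rfl] at this
      exact this
    have hZtr : (Z * Zᴴ).trace = (nn l : ℂ) := by
      rw [Matrix.trace_mul_comm]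
      have := dblBlock_trace V hV b nn hnn hn2 l q q
      rw [if_pos rfl] at this
      exact this
    rw [hXtr, hZtr, ← hSdef, hS] at hq
    simp only [Matrix.zero_mul, Matrix.mul_zero, Matrix.trace_zero] at hq
    have hnl : ((nn l : ℂ)) ≠ 0 := Nat.cast_ne_zero.mpr (hnn l).ne'
    have hnc : ((n : ℂ)) ≠ 0 := Nat.cast_ne_zero.mpr hn0.ne'
    have : ((m k : ℂ)) * (nn l : ℂ) / (n : ℂ) ≠ 0 :=
      div_ne_zero (mul_ne_zero (Nat.cast_ne_zero.mpr (hm k).ne') hnl) hnc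
    exact this hq.symm
  · -- use A = X X'ᴴ, B = Z' Zᴴ
    have hA : X * X'ᴴ ∈ (Submodule.span ℂ {M : Matrix (Fin n) (Fin n) ℂ |
        ∃ (k : Fin d1) (p q : Fin (a k)),
          M = dblBlock U a m hn1 k p * (dblBlock U a m hn1 k q)ᴴ} :
        Set (Matrix (Fin n) (Fin n) ℂ)) :=
      Submodule.subset_span ⟨k, p, p', rfl⟩
    have hB : Z' * Zᴴ ∈ (Submodule.span ℂ {M : Matrix (Fin n) (Fin n) ℂ |
        ∃ (l : Fin d2) (r s : Fin (b l)),
          M = dblBlock V b nn hn2 l r * (dblBlock V b nn hn2 l s)ᴴ} :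
        Set (Matrix (Fin n) (Fin n) ℂ)) :=
      Submodule.subset_span ⟨l, q', q, rfl⟩
    have hq := hquasi _ hA _ hB
    rw [hcyc X X' Z Z'] at hq
    rw [← heq, ← hSdef] at hq
    -- traces of A and B
    have hAtr : (X * X'ᴴ).trace = if p' = p then (m k : ℂ) else 0 := by
      rw [Matrix.trace_mul_comm]
      exact dblBlock_trace U hU a m hm hn1 k p' p
    have hBtr : (Z' * Zᴴ).trace = if q = q' then (nn l : ℂ) else 0 := by
      rw [Matrix.trace_mul_comm]
      exact dblBlock_trace V hV b nn hnn hn2 l q q'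
    have hzero : (X * X'ᴴ).trace * (Z' * Zᴴ).trace = 0 := by
      rw [hAtr, hBtr]
      by_cases hpp : p = p'
      · have hqq : ¬ q = q' := fun hqq => hne ⟨hpp, hqq⟩
        simp [hqq]
      · have : ¬ p' = p := fun h => hpp h.symm
        simp [this]
    rw [hzero, zero_div] at hq
    have hq' : (Sᴴ * S).trace = 0 := by
      rw [Matrix.trace_mul_comm] at hq
      exact hq
    exact hS (aux_trace_zero hq')
end

section
/- Let A and B be unital *-subalgebras of M_n(ℂ). Then A and B are quasiorthogonal if and only if every pair (C, D), where C is a maximal commutative *-subalgebra of A and D is a maximal commutative *-subalgebra of B, is quasiorthogonal. -/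
open Matrix

/-- `𝒞` is a commutative *-subalgebra of `𝒜`. -/
def IsCommSubalgebraOf {n : ℕ}
    (𝒞 𝒜 : StarSubalgebra ℂ (Matrix (Fin n) (Fin n) ℂ)) : Prop :=
  𝒞 ≤ 𝒜 ∧ ∀ x ∈ 𝒞, ∀ y ∈ 𝒞, x * y = y * x

/-- `𝒞` is a maximal commutative *-subalgebra of `𝒜`: it is a commutative
*-subalgebra of `𝒜` not properly contained in any other commutative *-subalgebra
of `𝒜`. -/
def IsMaxCommSubalgebraOf {n : ℕ}
    (𝒞 𝒜 : StarSubalgebra ℂ (Matrix (Fin n) (Fin n) ℂ)) : Prop :=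
  IsCommSubalgebraOf 𝒞 𝒜 ∧
    ∀ 𝒞' : StarSubalgebra ℂ (Matrix (Fin n) (Fin n) ℂ),
      IsCommSubalgebraOf 𝒞' 𝒜 → 𝒞 ≤ 𝒞' → 𝒞' = 𝒞

abbrev M (n : ℕ) := Matrix (Fin n) (Fin n) ℂ

/-- Elements of the star-subalgebra generated by a selfadjoint element commute
with the generator. -/
lemma commute_generator {n : ℕ} {a : M n} (ha : star a = a) :
    ∀ x ∈ StarAlgebra.adjoin ℂ {a}, a * x = x * a := by
  intro x hx
  induction hx using StarAlgebra.adjoin_induction with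
  | mem x hx => simp_all
  | algebraMap r => exact (Algebra.commutes r a).symm
  | add x y hx hy ihx ihy => rw [mul_add, add_mul, ihx, ihy]
  | mul x y hx hy ihx ihy => rw [← mul_assoc, ihx, mul_assoc, ihy, mul_assoc]
  | star x hx ih =>
      have := congrArg star ih
      simpa [ha, mul_comm] using this.symm

lemma adjoin_comm {n : ℕ} {a : M n} (ha : star a = a) :
    ∀ x ∈ StarAlgebra.adjoin ℂ {a}, ∀ y ∈ StarAlgebra.adjoin ℂ {a},
      x * y = y * x := by
  have hle : StarAlgebra.adjoin ℂ {a} ≤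
      StarSubalgebra.centralizer ℂ (StarAlgebra.adjoin ℂ {a} : Set (M n)) := by
    apply StarAlgebra.adjoin_le
    intro z hz
    rcases hz with rfl
    rw [SetLike.mem_coe, StarSubalgebra.mem_centralizer_iff]
    intro g hg
    constructor
    · exact (commute_generator ha g hg).symm
    · exact (commute_generator ha (star g) (star_mem hg)).symm
  intro x hx y hy
  have := (StarSubalgebra.mem_centralizer_iff ℂ).mp (hle hy) x hx
  exact this.1

/-- Every selfadjoint element of `𝒜` lies in a maximal commutative
*-subalgebra of `𝒜`. -/
lemma exists_maxComm {n : ℕ} (𝒜 : StarSubalgebra ℂ (M n)) {a : M n}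
    (haA : a ∈ 𝒜) (ha : star a = a) :
    ∃ 𝒞, IsMaxCommSubalgebraOf 𝒞 𝒜 ∧ a ∈ 𝒞 := by
  set s : Set (StarSubalgebra ℂ (M n)) := {𝒞 | IsCommSubalgebraOf 𝒞 𝒜} with hs
  have hbase : StarAlgebra.adjoin ℂ {a} ∈ s := by
    refine ⟨StarAlgebra.adjoin_le ?_, adjoin_comm ha⟩
    simpa using haA
  have hub : ∀ c ⊆ s, IsChain (· ≤ ·) c → ∀ y ∈ c, ∃ ub ∈ s, ∀ z ∈ c, z ≤ ub := by
    intro c hcs hchain y hyc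
    refine ⟨{ carrier := {x | ∃ S ∈ c, x ∈ S}
              mul_mem' := ?_
              one_mem' := ⟨y, hyc, one_mem y⟩
              add_mem' := ?_
              zero_mem' := ⟨y, hyc, zero_mem y⟩
              algebraMap_mem' := fun r => ⟨y, hyc, algebraMap_mem y r⟩
              star_mem' := ?_ }, ⟨?_, ?_⟩, ?_⟩
    · rintro p q ⟨S, hS, hp⟩ ⟨T, hT, hq⟩
      rcases hchain.total hS hT with h | h
      · exact ⟨T, hT, mul_mem (h hp) hq⟩
      · exact ⟨S, hS, mul_mem hp (h hq)⟩
    · rintro p q ⟨S, hS, hp⟩ ⟨T, hT, hq⟩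
      rcases hchain.total hS hT with h | h
      · exact ⟨T, hT, add_mem (h hp) hq⟩
      · exact ⟨S, hS, add_mem hp (h hq)⟩
    · rintro p ⟨S, hS, hp⟩
      exact ⟨S, hS, star_mem hp⟩
    · rintro p ⟨S, hS, hp⟩
      exact (hcs hS).1 hp
    · rintro p ⟨S, hS, hp⟩ q ⟨T, hT, hq⟩
      rcases hchain.total hS hT with h | h
      · exact (hcs hT).2 p (h hp) q hq
      · exact (hcs hS).2 p hp q (h hq)
    · intro S hS x hx
      exact ⟨S, hS, hx⟩
  obtain ⟨m, hm_le, hm⟩ := zorn_le_nonempty₀ s hub _ hbase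
  refine ⟨m, ⟨⟨hm.prop.1, hm.prop.2⟩, ?_⟩, hm_le (StarAlgebra.self_mem_adjoin_singleton ℂ a)⟩
  intro 𝒞' h𝒞' hle
  exact le_antisymm (hm.le_of_ge h𝒞' hle) hle

/-- Unital *-subalgebras `𝒜`, `ℬ` of `M_n(ℂ)` are quasiorthogonal
iff every pair `(𝒞, 𝒟)` of maximal commutative *-subalgebras of `𝒜` and of `ℬ`
respectively is quasiorthogonal. -/
theorem quasiorthogonal_iff_max_comm_subalgebras {n : ℕ}
    (𝒜 ℬ : StarSubalgebra ℂ (Matrix (Fin n) (Fin n) ℂ)) :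
    Quasiorthogonal (𝒜 : Set (Matrix (Fin n) (Fin n) ℂ))
        (ℬ : Set (Matrix (Fin n) (Fin n) ℂ)) ↔
      ∀ 𝒞 𝒟 : StarSubalgebra ℂ (Matrix (Fin n) (Fin n) ℂ),
        IsMaxCommSubalgebraOf 𝒞 𝒜 → IsMaxCommSubalgebraOf 𝒟 ℬ →
          Quasiorthogonal (𝒞 : Set (Matrix (Fin n) (Fin n) ℂ))
            (𝒟 : Set (Matrix (Fin n) (Fin n) ℂ)) := by
  constructor
  · intro h 𝒞 𝒟 h𝒞 h𝒟 A hA B hB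
    exact h A (h𝒞.1.1 hA) B (h𝒟.1.1 hB)
  · intro h
    have key : ∀ a ∈ 𝒜, star a = a → ∀ b ∈ ℬ, star b = b →
        (a * b).trace = a.trace * b.trace / (n : ℂ) := by
      intro a haA ha b hbB hb
      obtain ⟨𝒞, h𝒞, ha𝒞⟩ := exists_maxComm 𝒜 haA ha
      obtain ⟨𝒟, h𝒟, hb𝒟⟩ := exists_maxComm ℬ hbB hb
      exact h 𝒞 𝒟 h𝒞 h𝒟 a ha𝒞 b hb𝒟
    intro A hA B hB
    have hi : Complex.I * (2 * Complex.I)⁻¹ = 2⁻¹ := by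
      rw [mul_inv]
      rw [Complex.inv_I]
      ring_nf
      simp [Complex.I_sq]
      norm_num
    -- decompositions
    set A₁ : M n := (2:ℂ)⁻¹ • (A + star A) with hA₁def
    set A₂ : M n := (2 * Complex.I)⁻¹ • (A - star A) with hA₂def
    set B₁ : M n := (2:ℂ)⁻¹ • (B + star B) with hB₁def
    set B₂ : M n := (2 * Complex.I)⁻¹ • (B - star B) with hB₂def
    have hstar2 : star ((2:ℂ)⁻¹) = (2:ℂ)⁻¹ := by simp
    have hstar2I : star (((2:ℂ) * Complex.I)⁻¹) = -((2:ℂ) * Complex.I)⁻¹ := by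
      simp [star_inv₀, ← mul_inv, Complex.ext_iff]
    have hA₁sa : star A₁ = A₁ := by
      rw [hA₁def, star_smul, star_add, star_star, hstar2, add_comm]
    have hA₂sa : star A₂ = A₂ := by
      rw [hA₂def, star_smul, star_sub, star_star, hstar2I, neg_smul, ← smul_neg, neg_sub]
    have hB₁sa : star B₁ = B₁ := by
      rw [hB₁def, star_smul, star_add, star_star, hstar2, add_comm]
    have hB₂sa : star B₂ = B₂ := by
      rw [hB₂def, star_smul, star_sub, star_star, hstar2I, neg_smul, ← smul_neg, neg_sub]
    have hA₁mem : A₁ ∈ 𝒜 := 𝒜.smul_mem (add_mem hA (star_mem hA)) _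
    have hA₂mem : A₂ ∈ 𝒜 := 𝒜.smul_mem (sub_mem hA (star_mem hA)) _
    have hB₁mem : B₁ ∈ ℬ := ℬ.smul_mem (add_mem hB (star_mem hB)) _
    have hB₂mem : B₂ ∈ ℬ := ℬ.smul_mem (sub_mem hB (star_mem hB)) _
    have hAdec : A = A₁ + Complex.I • A₂ := by
      rw [hA₁def, hA₂def, smul_smul, hi, smul_add, smul_sub]
      module
    have hBdec : B = B₁ + Complex.I • B₂ := by
      rw [hB₁def, hB₂def, smul_smul, hi, smul_add, smul_sub]
      module
    have h11 := key A₁ hA₁mem hA₁sa B₁ hB₁mem hB₁sa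
    have h12 := key A₁ hA₁mem hA₁sa B₂ hB₂mem hB₂sa
    have h21 := key A₂ hA₂mem hA₂sa B₁ hB₁mem hB₁sa
    have h22 := key A₂ hA₂mem hA₂sa B₂ hB₂mem hB₂sa
    rw [hAdec, hBdec]
    simp only [Matrix.add_mul, Matrix.mul_add, Matrix.smul_mul, Matrix.mul_smul,
      trace_add, trace_smul, smul_eq_mul, h11, h12, h21, h22, smul_smul]
    field_simp
end

section
/- Let d, k ≥ 1 and n = dk. Suppose P = {P_a}_{a=1}^d and Q = {Q_b}_{b=1}^d are families of rank-k orthogonal projections on ℂ^n with Σ_a P_a = I_n and Σ_b Q_b = I_n. Then the following are equivalent: (i) P and Q form a mutually unbiased measurement (MUM), i.e., P_aQ_bP_a = (1/d)P_a and Q_bP_aQ_b = (1/d)Q_b for all a, b; (ii) the commutative algebras A = span{P_a} and B = span{Q_b} are quasiorthogonal, and moreover P_aQ_bP_a ∈ A and Q_bP_aQ_b ∈ B for all a, b. -/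
open Matrix

lemma trace_eq_rank_of_idem {n : ℕ} (M : Matrix (Fin n) (Fin n) ℂ) (h : M * M = M) :
    M.trace = (M.rank : ℂ) := by
  have hf : M.mulVecLin ∘ₗ M.mulVecLin = M.mulVecLin := by
    rw [← Matrix.mulVecLin_mul, h]
  obtain ⟨p, hp⟩ := (LinearMap.isProj_iff_isIdempotentElem _).mpr hf
  have htr := hp.trace
  have hp' : p = LinearMap.range M.mulVecLin := by
    apply le_antisymm
    · intro x hx
      exact ⟨x, hp.map_id x hx⟩
    · rintro x ⟨y, rfl⟩
      exact hp.map_mem y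
  have hmt : LinearMap.trace ℂ (Fin n → ℂ) M.mulVecLin = M.trace := by
    rw [LinearMap.trace_eq_matrix_trace ℂ (Pi.basisFun ℂ (Fin n)),
      LinearMap.toMatrix_eq_toMatrix', ← Matrix.toLin'_apply', LinearMap.toMatrix'_toLin']
  rw [Matrix.rank, ← hp', ← htr, hmt]

lemma trace_conjTranspose_mul_self {n : ℕ} (A : Matrix (Fin n) (Fin n) ℂ) :
    (Aᴴ * A).trace = ((∑ j, ∑ i, Complex.normSq (A i j) : ℝ) : ℂ) := by
  push_cast
  simp [Matrix.trace, Matrix.mul_apply, Matrix.diag, Matrix.conjTranspose_apply,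
    Complex.normSq_eq_conj_mul_self]

lemma ortho_of_sum_one {n d : ℕ} (P : Fin d → Matrix (Fin n) (Fin n) ℂ)
    (hproj : ∀ a, (P a)ᴴ = P a ∧ P a * P a = P a) (hsum : ∑ a, P a = 1) :
    ∀ a c, a ≠ c → P c * P a = 0 := by
  intro a c hac
  have hterm : ∀ e : Fin d, (P e * P a)ᴴ * (P e * P a) = P a * P e * P a := by
    intro e
    rw [Matrix.conjTranspose_mul, (hproj e).1, (hproj a).1]
    calc P a * P e * (P e * P a) = P a * (P e * P e) * P a := by noncomm_ring
      _ = P a * P e * P a := by rw [(hproj e).2]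
  have hsum2 : ∑ e, P a * P e * P a = P a := by
    rw [← Finset.sum_mul, ← Finset.mul_sum, hsum, mul_one, (hproj a).2]
  set r : Fin d → ℝ := fun e => ∑ j, ∑ i, Complex.normSq ((P e * P a) i j) with hr
  have htr : ∀ e, (P a * P e * P a).trace = (r e : ℂ) := by
    intro e
    rw [← hterm e, trace_conjTranspose_mul_self]
  have hsumtr : ((∑ e, r e : ℝ) : ℂ) = (P a).trace := by
    push_cast
    rw [← hsum2, Matrix.trace_sum]
    exact Finset.sum_congr rfl fun e _ => (htr e).symm
  have hra : ((r a : ℝ) : ℂ) = (P a).trace := by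
    rw [← htr a]
    congr 1
    rw [(hproj a).2, (hproj a).2]
  have hrest : ∑ e ∈ Finset.univ.erase a, r e = 0 := by
    have h1 : ((∑ e, r e : ℝ) : ℂ) = ((r a : ℝ) : ℂ) := by rw [hsumtr, hra]
    have h2 : (∑ e, r e : ℝ) = r a := by exact_mod_cast h1
    have h3 : ∑ e, r e = r a + ∑ e ∈ Finset.univ.erase a, r e := by
      rw [← Finset.add_sum_erase _ _ (Finset.mem_univ a)]
    linarith
  have hrc : r c = 0 := by
    have hnn : ∀ e ∈ Finset.univ.erase a, 0 ≤ r e := fun e _ =>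
      Finset.sum_nonneg fun j _ => Finset.sum_nonneg fun i _ => Complex.normSq_nonneg _
    have := (Finset.sum_eq_zero_iff_of_nonneg hnn).mp hrest c
      (Finset.mem_erase.mpr ⟨fun h => hac h.symm, Finset.mem_univ c⟩)
    exact this
  ext i j
  have : Complex.normSq ((P c * P a) i j) = 0 := by
    have hnn : ∀ j' ∈ Finset.univ, (0:ℝ) ≤ ∑ i', Complex.normSq ((P c * P a) i' j') :=
      fun j' _ => Finset.sum_nonneg fun i' _ => Complex.normSq_nonneg _
    have h1 := (Finset.sum_eq_zero_iff_of_nonneg hnn).mp hrc j (Finset.mem_univ j)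
    have hnn2 : ∀ i' ∈ Finset.univ, (0:ℝ) ≤ Complex.normSq ((P c * P a) i' j) :=
      fun i' _ => Complex.normSq_nonneg _
    exact (Finset.sum_eq_zero_iff_of_nonneg hnn2).mp h1 i (Finset.mem_univ i)
  simpa using Complex.normSq_eq_zero.mp this

lemma compress_mem_span {n d : ℕ} (P : Fin d → Matrix (Fin n) (Fin n) ℂ)
    (hproj : ∀ a, (P a)ᴴ = P a ∧ P a * P a = P a) (hsum : ∑ a, P a = 1)
    (a : Fin d) {X : Matrix (Fin n) (Fin n) ℂ}
    (hX : X ∈ Submodule.span ℂ (Set.range P)) :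
    ∃ c : ℂ, P a * X * P a = c • P a := by
  induction hX using Submodule.span_induction with
  | mem x hx =>
    obtain ⟨e, rfl⟩ := hx
    by_cases h : e = a
    · subst h
      refine ⟨1, ?_⟩
      rw [(hproj e).2, (hproj e).2, one_smul]
    · refine ⟨0, ?_⟩
      rw [mul_assoc, ortho_of_sum_one P hproj hsum a e (Ne.symm h), mul_zero, zero_smul]
  | zero => exact ⟨0, by simp⟩
  | add x y hx hy ihx ihy =>
    obtain ⟨c1, h1⟩ := ihx
    obtain ⟨c2, h2⟩ := ihy
    exact ⟨c1 + c2, by rw [mul_add, add_mul, h1, h2, add_smul]⟩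
  | smul t x hx ih =>
    obtain ⟨c, h1⟩ := ih
    exact ⟨t * c, by rw [mul_smul_comm, smul_mul_assoc, h1, smul_smul]⟩

/-- Let `n = dk` and let `P = {P_a}`, `Q = {Q_b}` be families of `d`
rank-`k` orthogonal projections on `ℂ^n` each summing to the identity (`d`-outcome von
Neumann measurements).  Then `P` and `Q` form a mutually unbiased measurement (MUM),
i.e. `P_a Q_b P_a = (1/d) P_a` and `Q_b P_a Q_b = (1/d) Q_b` for all `a, b`, iff the
commutative algebras `𝒜 = span {P_a}` and `ℬ = span {Q_b}` are quasiorthogonal and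
moreover `P_a Q_b P_a ∈ 𝒜` and `Q_b P_a Q_b ∈ ℬ` for all `a, b`. -/
theorem mum_iff_quasiorthogonal_and_products_mem {d k n : ℕ}
    (hd : 1 ≤ d) (hk : 1 ≤ k) (hn : n = d * k)
    (P Q : Fin d → Matrix (Fin n) (Fin n) ℂ)
    (hPproj : ∀ a, (P a)ᴴ = P a ∧ P a * P a = P a)
    (hPrank : ∀ a, (P a).rank = k)
    (hPsum : ∑ a, P a = 1)
    (hQproj : ∀ b, (Q b)ᴴ = Q b ∧ Q b * Q b = Q b)
    (hQrank : ∀ b, (Q b).rank = k)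
    (hQsum : ∑ b, Q b = 1) :
    (∀ a b, P a * Q b * P a = ((d : ℂ))⁻¹ • P a ∧
        Q b * P a * Q b = ((d : ℂ))⁻¹ • Q b) ↔
      (Quasiorthogonal
          (Submodule.span ℂ (Set.range P) : Set (Matrix (Fin n) (Fin n) ℂ))
          (Submodule.span ℂ (Set.range Q) : Set (Matrix (Fin n) (Fin n) ℂ)) ∧
        ∀ a b, P a * Q b * P a ∈ Submodule.span ℂ (Set.range P) ∧
          Q b * P a * Q b ∈ Submodule.span ℂ (Set.range Q)) := by
  have hdC : (d : ℂ) ≠ 0 := Nat.cast_ne_zero.mpr (by omega)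
  have hkC : (k : ℂ) ≠ 0 := Nat.cast_ne_zero.mpr (by omega)
  have hnC : (n : ℂ) ≠ 0 := by
    rw [hn]; push_cast; exact mul_ne_zero hdC hkC
  have htrP : ∀ a, (P a).trace = (k : ℂ) := fun a => by
    rw [trace_eq_rank_of_idem _ (hPproj a).2, hPrank a]
  have htrQ : ∀ b, (Q b).trace = (k : ℂ) := fun b => by
    rw [trace_eq_rank_of_idem _ (hQproj b).2, hQrank b]
  have hPmem : ∀ a, P a ∈ Submodule.span ℂ (Set.range P) :=
    fun a => Submodule.subset_span ⟨a, rfl⟩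
  have hQmem : ∀ b, Q b ∈ Submodule.span ℂ (Set.range Q) :=
    fun b => Submodule.subset_span ⟨b, rfl⟩
  constructor
  · intro h
    refine ⟨?_, fun a b => ⟨?_, ?_⟩⟩
    · have base : ∀ a b, (P a * Q b).trace = (P a).trace * (Q b).trace / (n : ℂ) := by
        intro a b
        have h1 : (P a * Q b * P a).trace = (P a * Q b).trace := by
          rw [Matrix.trace_mul_cycle, (hPproj a).2]
        have h2 := congrArg Matrix.trace (h a b).1
        rw [h1, Matrix.trace_smul, smul_eq_mul] at h2
        rw [h2, htrP, htrQ, hn]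
        push_cast
        field_simp
      intro A hA
      induction hA using Submodule.span_induction with
      | mem x hx =>
        obtain ⟨a, rfl⟩ := hx
        intro B hB
        induction hB using Submodule.span_induction with
        | mem y hy => obtain ⟨b, rfl⟩ := hy; exact base a b
        | zero => simp
        | add y z hy hz ihy ihz =>
          rw [mul_add, trace_add, trace_add, ihy, ihz]; ring
        | smul t y hy ih =>
          rw [mul_smul_comm, trace_smul, trace_smul, ih, smul_eq_mul, smul_eq_mul]; ring
      | zero => intro B hB; simp
      | add x y hx hy ihx ihy =>
        intro B hB
        rw [add_mul, trace_add, trace_add, ihx B hB, ihy B hB]; ring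
      | smul t x hx ih =>
        intro B hB
        rw [smul_mul_assoc, trace_smul, trace_smul, ih B hB, smul_eq_mul, smul_eq_mul]; ring
    · rw [(h a b).1]; exact Submodule.smul_mem _ _ (hPmem a)
    · rw [(h a b).2]; exact Submodule.smul_mem _ _ (hQmem b)
  · rintro ⟨hqo, hmem⟩ a b
    have hPQ : (P a * Q b).trace = (k : ℂ) / (d : ℂ) := by
      rw [hqo (P a) (hPmem a) (Q b) (hQmem b), htrP, htrQ, hn]
      push_cast
      field_simp
    constructor
    · obtain ⟨c, hc⟩ := compress_mem_span P hPproj hPsum a (hmem a b).1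
      have hc' : P a * Q b * P a = c • P a := by
        rw [← hc]
        rw [show P a * (P a * Q b * P a) * P a = P a * P a * Q b * (P a * P a) by noncomm_ring,
          (hPproj a).2]
      have htr1 : (P a * Q b * P a).trace = (k : ℂ) / (d : ℂ) := by
        rw [Matrix.trace_mul_cycle, (hPproj a).2, hPQ]
      have htr2 := congrArg Matrix.trace hc'
      rw [htr1, Matrix.trace_smul, htrP, smul_eq_mul] at htr2
      have hcval : c = (d : ℂ)⁻¹ := by
        have h3 : c * k = (d:ℂ)⁻¹ * k := by
          rw [← htr2]; field_simp
        exact mul_right_cancel₀ hkC h3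
      rw [hc', hcval]
    · obtain ⟨c, hc⟩ := compress_mem_span Q hQproj hQsum b (hmem a b).2
      have hc' : Q b * P a * Q b = c • Q b := by
        rw [← hc]
        rw [show Q b * (Q b * P a * Q b) * Q b = Q b * Q b * P a * (Q b * Q b) by noncomm_ring,
          (hQproj b).2]
      have htr1 : (Q b * P a * Q b).trace = (k : ℂ) / (d : ℂ) := by
        rw [Matrix.trace_mul_cycle, (hQproj b).2, Matrix.trace_mul_comm, hPQ]
      have htr2 := congrArg Matrix.trace hc'
      rw [htr1, Matrix.trace_smul, htrQ, smul_eq_mul] at htr2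
      have hcval : c = (d : ℂ)⁻¹ := by
        have h3 : c * k = (d:ℂ)⁻¹ * k := by
          rw [← htr2]; field_simp
        exact mul_right_cancel₀ hkC h3
      rw [hc', hcval]
end
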